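/- arXiv:2308.00637 — 2 statements merged into one kernel-verified Lean document; each statement's English description precedes it below -/
import Mathlib

section
/- Let M = [[Q + 2BᵀD⁻¹B, Bᵀ],[B, D]] with Q ∈ ℝ^{n×n} SPD, D ∈ ℝ^{m×m} SPD, B ∈ ℝ^{m×n}. Then for any nonzero vector (x, y) ∈ ℝ^{n+m}, the quadratic form satisfies (x,y)ᵀM(x,y) = xᵀQx + (y + D⁻¹Bx)ᵀD(y + D⁻¹Bx) + xᵀBᵀD⁻¹Bx > 0. -/
open Matrix

theorem doubly_augmented_quadratic_form {n m : ℕ}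
    (Q : Matrix (Fin n) (Fin n) ℝ) (D : Matrix (Fin m) (Fin m) ℝ)
    (B : Matrix (Fin m) (Fin n) ℝ) (hQ : Q.PosDef) (hD : D.PosDef)
    (x : Fin n → ℝ) (y : Fin m → ℝ) (hxy : ¬(x = 0 ∧ y = 0)) :
    Sum.elim x y ⬝ᵥ
        (Matrix.fromBlocks (Q + (2 : ℝ) • (Bᵀ * D⁻¹ * B)) Bᵀ B D).mulVec
          (Sum.elim x y)
      = x ⬝ᵥ Q.mulVec x
        + (y + D⁻¹.mulVec (B.mulVec x)) ⬝ᵥ D.mulVec (y + D⁻¹.mulVec (B.mulVec x))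
        + x ⬝ᵥ (Bᵀ * D⁻¹ * B).mulVec x ∧
      0 < Sum.elim x y ⬝ᵥ
        (Matrix.fromBlocks (Q + (2 : ℝ) • (Bᵀ * D⁻¹ * B)) Bᵀ B D).mulVec
          (Sum.elim x y) := by
  have hDsymm : Dᵀ = D := hD.1
  have hDinvsymm : D⁻¹ᵀ = D⁻¹ := hD.inv.1
  set z : Fin m → ℝ := B.mulVec x with hz
  set w : Fin m → ℝ := D⁻¹.mulVec z with hw
  have hDw : D.mulVec w = z := by
    rw [hw, mulVec_mulVec, Matrix.mul_nonsing_inv _ (isUnit_iff_ne_zero.mpr hD.det_pos.ne'),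
      one_mulVec]
  -- x ⬝ᵥ Bᵀ *ᵥ v = z ⬝ᵥ v
  have hBt : ∀ v : Fin m → ℝ, x ⬝ᵥ Bᵀ.mulVec v = z ⬝ᵥ v := by
    intro v
    rw [dotProduct_mulVec, vecMul_transpose]
  -- symmetry of D
  have hDsym : ∀ u v : Fin m → ℝ, u ⬝ᵥ D.mulVec v = v ⬝ᵥ D.mulVec u := by
    intro u v
    rw [dotProduct_mulVec]
    conv_lhs => rw [← hDsymm]
    rw [vecMul_transpose, dotProduct_comm]
  have hBDB : (Bᵀ * D⁻¹ * B).mulVec x = Bᵀ.mulVec w := by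
    rw [hw, hz, ← mulVec_mulVec, ← mulVec_mulVec]
  have key : Sum.elim x y ⬝ᵥ
        (Matrix.fromBlocks (Q + (2 : ℝ) • (Bᵀ * D⁻¹ * B)) Bᵀ B D).mulVec
          (Sum.elim x y)
      = x ⬝ᵥ Q.mulVec x
        + (y + w) ⬝ᵥ D.mulVec (y + w)
        + x ⬝ᵥ (Bᵀ * D⁻¹ * B).mulVec x := by
    rw [fromBlocks_mulVec, sumElim_dotProduct_sumElim]
    simp only [Sum.elim_comp_inl, Sum.elim_comp_inr]
    rw [add_mulVec, smul_mulVec, hBDB, mulVec_add, hDw]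
    simp only [dotProduct_add, add_dotProduct, dotProduct_smul, smul_eq_mul, hBt]
    rw [hDsym w y, hDw, dotProduct_comm y z, dotProduct_comm w z]
    ring
  refine ⟨key, ?_⟩
  rw [key]
  have hmid : 0 ≤ (y + w) ⬝ᵥ D.mulVec (y + w) := by
    have := hD.posSemidef.re_dotProduct_nonneg (y + w)
    simpa using this
  have hthird : 0 ≤ x ⬝ᵥ (Bᵀ * D⁻¹ * B).mulVec x := by
    rw [hBDB, hBt, hw]
    have := hD.inv.posSemidef.re_dotProduct_nonneg z
    simpa using this
  by_cases hx : x = 0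
  · have hy : y ≠ 0 := fun hy => hxy ⟨hx, hy⟩
    have hz0 : z = 0 := by simp [hz, hx]
    have hw0 : w = 0 := by simp [hw, hz0]
    have hpos : 0 < (y + w) ⬝ᵥ D.mulVec (y + w) := by
      have := hD.re_dotProduct_pos (x := y + w) (by simp [hw0, hy])
      simpa using this
    have hq : 0 ≤ x ⬝ᵥ Q.mulVec x := by
      have := hQ.posSemidef.re_dotProduct_nonneg x
      simpa using this
    linarith
  · have hq : 0 < x ⬝ᵥ Q.mulVec x := by
      have := hQ.re_dotProduct_pos hx
      simpa using this
    linarith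
end

section
/- Let A be symmetric positive definite of size n ≥ 2 with diagonal D = diag(A). Then the Jacobi-preconditioned matrix D^{-1/2} A D^{-1/2} has all diagonal entries equal to 1, and its condition number satisfies κ₂(D^{-1/2} A D^{-1/2}) ≤ n · min_{diagonal S ≻ 0} κ₂(S A S) — in particular κ₂(D^{-1/2} A D^{-1/2}) ≤ n · κ₂(A). -/
open Matrix

/-- Spectral condition number of a real symmetric matrix:
ratio of largest to smallest eigenvalue (0 if not Hermitian). -/
noncomputable def kappa {n : ℕ} (A : Matrix (Fin n) (Fin n) ℝ) : ℝ :=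
  if h : A.IsHermitian then (⨆ i, h.eigenvalues i) / (⨅ i, h.eigenvalues i) else 0

/-!
Any positive diagonal scaling `S A S` equals `T J T` for the Jacobi-scaled matrix `J` and
`T = S D^{1/2}`, so it suffices to compare `J` with `T J T`. Since `J` has unit diagonal,
`λ_max(J) ≤ tr J = n`. Let `t_k` be the largest `|t_i|`. The Rayleigh quotient of `T J T` at the
coordinate vector `e_k` gives `λ_max(T J T) ≥ t_k²`, and at `T⁻¹ u`, for `u` an eigenvector of
`J` for `λ_min(J)`, it gives `λ_min(T J T) ≤ t_k² λ_min(J)`. Hence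
`κ(T J T) ≥ 1 / λ_min(J) ≥ κ(J) / n`.
-/

namespace Matrix

variable {ι : Type*} [Fintype ι] [DecidableEq ι] {B : Matrix ι ι ℝ}

namespace IsHermitian

lemma star_eigenvectorUnitary_mulVec_eq_dotProduct (hB : B.IsHermitian) (x : ι → ℝ) :
    star (hB.eigenvectorUnitary : Matrix ι ι ℝ) *ᵥ x = fun i ↦ ⇑(hB.eigenvectorBasis i) ⬝ᵥ x := by
  ext i
  simp [mulVec, dotProduct]

lemma dotProduct_eigenvectorUnitary_mulVec (hB : B.IsHermitian) (x w : ι → ℝ) :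
    x ⬝ᵥ ((hB.eigenvectorUnitary : Matrix ι ι ℝ) *ᵥ w) =
      (fun i ↦ ⇑(hB.eigenvectorBasis i) ⬝ᵥ x) ⬝ᵥ w := by
  rw [dotProduct_mulVec, ← star_eigenvectorUnitary_mulVec_eq_dotProduct, star_eq_conjTranspose,
    conjTranspose_eq_transpose_of_trivial, mulVec_transpose]

lemma dotProduct_mulVec_eq_sum_eigenvalues (hB : B.IsHermitian) (x : ι → ℝ) :
    x ⬝ᵥ (B *ᵥ x) = ∑ i, hB.eigenvalues i * (⇑(hB.eigenvectorBasis i) ⬝ᵥ x) ^ 2 := by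
  conv_lhs => rw [hB.spectral_theorem, Unitary.conjStarAlgAut_apply]
  rw [← mulVec_mulVec, ← mulVec_mulVec, dotProduct_eigenvectorUnitary_mulVec,
    star_eigenvectorUnitary_mulVec_eq_dotProduct]
  simp [dotProduct, mulVec_diagonal, sq, mul_left_comm]

lemma dotProduct_self_eq_sum_sq (hB : B.IsHermitian) (x : ι → ℝ) :
    x ⬝ᵥ x = ∑ i, (⇑(hB.eigenvectorBasis i) ⬝ᵥ x) ^ 2 := by
  calc x ⬝ᵥ x = x ⬝ᵥ ((hB.eigenvectorUnitary : Matrix ι ι ℝ) *ᵥ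
        (star (hB.eigenvectorUnitary : Matrix ι ι ℝ) *ᵥ x)) := by
          rw [mulVec_mulVec, Unitary.mul_star_self_of_mem hB.eigenvectorUnitary.2, one_mulVec]
    _ = _ := by
      rw [dotProduct_eigenvectorUnitary_mulVec, star_eigenvectorUnitary_mulVec_eq_dotProduct]
      simp [dotProduct, sq]

lemma iInf_eigenvalues_mul_dotProduct_self_le (hB : B.IsHermitian) (x : ι → ℝ) :
    (⨅ i, hB.eigenvalues i) * (x ⬝ᵥ x) ≤ x ⬝ᵥ (B *ᵥ x) := by
  rw [hB.dotProduct_self_eq_sum_sq, hB.dotProduct_mulVec_eq_sum_eigenvalues, Finset.mul_sum]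
  gcongr with i
  exact ciInf_le (Set.finite_range _).bddBelow i

lemma dotProduct_mulVec_le_iSup_eigenvalues_mul (hB : B.IsHermitian) (x : ι → ℝ) :
    x ⬝ᵥ (B *ᵥ x) ≤ (⨆ i, hB.eigenvalues i) * (x ⬝ᵥ x) := by
  rw [hB.dotProduct_self_eq_sum_sq, hB.dotProduct_mulVec_eq_sum_eigenvalues, Finset.mul_sum]
  gcongr with i
  exact le_ciSup (Set.finite_range _).bddAbove i

lemma diag_le_iSup_eigenvalues (hB : B.IsHermitian) (k : ι) : B k k ≤ ⨆ i, hB.eigenvalues i := by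
  simpa [mulVec_single, single_dotProduct] using
    hB.dotProduct_mulVec_le_iSup_eigenvalues_mul (Pi.single k 1)

end IsHermitian

lemma PosSemidef.iSup_eigenvalues_le_trace [Nonempty ι] (hB : B.PosSemidef) :
    ⨆ i, hB.1.eigenvalues i ≤ B.trace := by
  rw [hB.1.trace_eq_sum_eigenvalues]
  exact ciSup_le fun i ↦ by
    simpa using Finset.single_le_sum (fun j _ ↦ hB.eigenvalues_nonneg j) (Finset.mem_univ i)

lemma PosDef.iInf_eigenvalues_pos [Nonempty ι] (hB : B.PosDef) :
    0 < ⨅ i, hB.1.eigenvalues i := by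
  obtain ⟨i, hi⟩ := exists_eq_ciInf_of_finite (f := hB.1.eigenvalues)
  exact hi ▸ hB.eigenvalues_pos i

lemma dotProduct_diagonal_mul_mul_diagonal_mulVec {R : Type*} [CommSemiring R] (t x : ι → R)
    (J : Matrix ι ι R) :
    x ⬝ᵥ ((diagonal t * J * diagonal t) *ᵥ x) =
      (diagonal t *ᵥ x) ⬝ᵥ (J *ᵥ (diagonal t *ᵥ x)) := by
  rw [← mulVec_mulVec, ← mulVec_mulVec, dotProduct_mulVec]
  congr 1
  rw [← vecMul_transpose, diagonal_transpose]

lemma PosDef.diagonal_mul_mul_diagonal {J : Matrix ι ι ℝ} (hJ : J.PosDef) {t : ι → ℝ}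
    (ht : ∀ i, t i ≠ 0) : (diagonal t * J * diagonal t).PosDef := by
  simpa using hJ.conjTranspose_mul_mul_same (B := diagonal t)
    (mulVec_injective_of_isUnit (isUnit_diagonal.mpr (Pi.isUnit_iff.mpr fun i ↦ (ht i).isUnit)))

lemma iInf_eigenvalues_diagonal_mul_mul_diagonal_le [Nonempty ι] {J : Matrix ι ι ℝ}
    (hJ : J.PosSemidef) {t : ι → ℝ} (hB : (diagonal t * J * diagonal t).IsHermitian)
    (ht : ∀ i, t i ≠ 0) {c : ℝ} (hc : ∀ i, t i ^ 2 ≤ c) :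
    ⨅ i, hB.eigenvalues i ≤ c * ⨅ i, hJ.1.eigenvalues i := by
  obtain ⟨i₀, hi₀⟩ := exists_eq_ciInf_of_finite (f := hJ.1.eigenvalues)
  set u : ι → ℝ := ⇑(hJ.1.eigenvectorBasis i₀)
  set x : ι → ℝ := fun i ↦ u i / t i
  have hxu : diagonal t *ᵥ x = u := by
    ext i
    simp [x, mulVec_diagonal, mul_div_cancel₀ _ (ht i)]
  have hx : 0 < x ⬝ᵥ x := by
    have hu : u ≠ 0 := (WithLp.ofLp_eq_zero 2).ne.2 (hJ.1.eigenvectorBasis.orthonormal.ne_zero i₀)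
    simpa using dotProduct_star_self_pos_iff.2 fun h : x = 0 ↦ hu (by simp [← hxu, h])
  have huu : u ⬝ᵥ u ≤ c * (x ⬝ᵥ x) := by
    simp only [← hxu, mulVec_diagonal, dotProduct, Finset.mul_sum]
    refine Finset.sum_le_sum fun i _ ↦ ?_
    nlinarith [hc i, mul_self_nonneg (x i)]
  have hquad : x ⬝ᵥ ((diagonal t * J * diagonal t) *ᵥ x) =
      (⨅ i, hJ.1.eigenvalues i) * (u ⬝ᵥ u) := by
    rw [dotProduct_diagonal_mul_mul_diagonal_mulVec, hxu, ← hi₀, hJ.1.mulVec_eigenvectorBasis,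
      dotProduct_smul, smul_eq_mul]
  have hmin_nonneg : 0 ≤ ⨅ i, hJ.1.eigenvalues i := hi₀ ▸ hJ.eigenvalues_nonneg i₀
  refine le_of_mul_le_mul_right ?_ hx
  calc (⨅ i, hB.eigenvalues i) * (x ⬝ᵥ x) ≤ _ := hB.iInf_eigenvalues_mul_dotProduct_self_le x
    _ = (⨅ i, hJ.1.eigenvalues i) * (u ⬝ᵥ u) := hquad
    _ ≤ (⨅ i, hJ.1.eigenvalues i) * (c * (x ⬝ᵥ x)) := by gcongr
    _ = c * (⨅ i, hJ.1.eigenvalues i) * (x ⬝ᵥ x) := by ring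

end Matrix

lemma kappa_eq_of_isHermitian {n : ℕ} {A : Matrix (Fin n) (Fin n) ℝ} (hA : A.IsHermitian) :
    kappa A = (⨆ i, hA.eigenvalues i) / ⨅ i, hA.eigenvalues i :=
  dif_pos hA

lemma kappa_le_mul_kappa_diagonal_mul_mul_diagonal {n : ℕ} [Nonempty (Fin n)]
    {J : Matrix (Fin n) (Fin n) ℝ} (hJ : J.PosDef) (hdiag : ∀ i, J i i = 1) {t : Fin n → ℝ}
    (ht : ∀ i, t i ≠ 0) : kappa J ≤ n * kappa (diagonal t * J * diagonal t) := by
  have hB := hJ.diagonal_mul_mul_diagonal ht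
  obtain ⟨k, hk⟩ := Finite.exists_max fun i ↦ t i ^ 2
  have htk : 0 < t k ^ 2 := by have := ht k; positivity
  have hmaxJ : ⨆ i, hJ.1.eigenvalues i ≤ n := by
    simpa [trace, hdiag] using hJ.posSemidef.iSup_eigenvalues_le_trace
  have hmaxB : t k ^ 2 ≤ ⨆ i, hB.1.eigenvalues i := by
    simpa [hdiag, sq] using hB.1.diag_le_iSup_eigenvalues k
  have hminB := iInf_eigenvalues_diagonal_mul_mul_diagonal_le hJ.posSemidef hB.1 ht hk
  have hminJ_pos := hJ.iInf_eigenvalues_pos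
  have hminB_pos := hB.iInf_eigenvalues_pos
  rw [kappa_eq_of_isHermitian hJ.1, kappa_eq_of_isHermitian hB.1, ← mul_div_assoc]
  calc (⨆ i, hJ.1.eigenvalues i) / (⨅ i, hJ.1.eigenvalues i)
      ≤ n / (⨅ i, hJ.1.eigenvalues i) := by gcongr
    _ = n * t k ^ 2 / (t k ^ 2 * ⨅ i, hJ.1.eigenvalues i) := by
      rw [mul_comm (t k ^ 2), mul_div_mul_right _ _ htk.ne']
    _ ≤ n * (⨆ i, hB.1.eigenvalues i) / ⨅ i, hB.1.eigenvalues i := by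
      gcongr
      exact mul_nonneg n.cast_nonneg (htk.le.trans hmaxB)

theorem jacobi_scaling_near_optimal {n : ℕ} (hn : 2 ≤ n)
    (A : Matrix (Fin n) (Fin n) ℝ) (hA : A.PosDef)
    (J : Matrix (Fin n) (Fin n) ℝ)
    (hJ : J = Matrix.diagonal (fun i => (Real.sqrt (A i i))⁻¹) * A *
      Matrix.diagonal (fun i => (Real.sqrt (A i i))⁻¹)) :
    (∀ i, J i i = 1) ∧
      (∀ s : Fin n → ℝ, (∀ i, 0 < s i) →
        kappa J ≤ n * kappa (Matrix.diagonal s * A * Matrix.diagonal s)) ∧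
      kappa J ≤ n * kappa A := by
  have : Nonempty (Fin n) := ⟨⟨0, by omega⟩⟩
  have hsqrt : ∀ i, √(A i i) ≠ 0 := fun i ↦ (Real.sqrt_pos.2 hA.diag_pos).ne'
  have hdiag : ∀ i, J i i = 1 := fun i ↦ by
    simp only [hJ, diagonal_mul, mul_diagonal]
    nth_rw 2 [← Real.mul_self_sqrt hA.diag_pos.le]
    field_simp [hsqrt i]
  have hJpd : J.PosDef := hJ ▸ hA.diagonal_mul_mul_diagonal fun i ↦ inv_ne_zero (hsqrt i)
  have hscaled : ∀ s : Fin n → ℝ, (∀ i, 0 < s i) →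
      kappa J ≤ n * kappa (diagonal s * A * diagonal s) := fun s hs ↦ by
    have hsJ : diagonal s * A * diagonal s =
        diagonal (fun i ↦ s i * √(A i i)) * J * diagonal (fun i ↦ s i * √(A i i)) := by
      ext i j
      simp only [hJ, diagonal_mul, mul_diagonal]
      field_simp [hsqrt i, hsqrt j]
    rw [hsJ]
    exact kappa_le_mul_kappa_diagonal_mul_mul_diagonal hJpd hdiag
      fun i ↦ mul_ne_zero (hs i).ne' (hsqrt i)
  exact ⟨hdiag, hscaled, by simpa using hscaled 1 fun _ ↦ one_pos⟩
end
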